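/- For n >= 1 and all real x with 0 < |x| <= 1/(3*sqrt(n)), one has Ĥ_{n-1}(x)/Ĥ_n(x) <= 1/(n*x^2). -/

import Mathlib

open Polynomial

/-- The monic probabilists' Hermite polynomials. -/
noncomputable def hermiteP : ℕ → Polynomial ℝ
  | 0 => 1
  | 1 => X
  | (n + 2) => X * hermiteP (n + 1) - C ((n : ℝ) + 1) * hermiteP n

lemma hermiteP_natDegree : ∀ n, (hermiteP n).natDegree = n := by
  intro n
  induction n using Nat.strong_induction_on with
  | _ n ih =>
    match n with
    | 0 => simp [hermiteP]
    | 1 => simp [hermiteP]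
    | (m + 2) =>
      have h1 : (hermiteP (m + 1)).natDegree = m + 1 := ih _ (by omega)
      have h0 : (hermiteP m).natDegree = m := ih _ (by omega)
      have hX : (X * hermiteP (m + 1)).natDegree = m + 2 := by
        rw [natDegree_X_mul, h1]
        · intro h
          apply_fun natDegree at h
          simp [h1] at h
      rw [hermiteP, natDegree_sub_eq_left_of_natDegree_lt, hX]
      rw [hX]
      calc (C ((m : ℝ) + 1) * hermiteP m).natDegree ≤ (hermiteP m).natDegree :=
            natDegree_C_mul_le _ _
        _ < m + 2 := by omega

lemma hermiteP_rev_eval (n : ℕ) (x : ℝ) (hx : x ≠ 0) :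
    (hermiteP n).reverse.eval x = x ^ n * (hermiteP n).eval x⁻¹ := by
  have hxi : x⁻¹ ≠ 0 := inv_ne_zero hx
  letI : Invertible (x⁻¹) := invertibleOfNonzero hxi
  have := eval₂_reverse_mul_pow (RingHom.id ℝ) x⁻¹ (hermiteP n)
  rw [invOf_eq_inv, inv_inv] at this
  simp only [eval₂_eq_eval_map, Polynomial.map_id, hermiteP_natDegree] at this
  have hpow : (x⁻¹ : ℝ) ^ n ≠ 0 := pow_ne_zero _ hxi
  field_simp at this ⊢
  rw [← this, mul_assoc, ← mul_pow, one_div_mul_cancel hx, one_pow, mul_one]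

noncomputable def gval (x : ℝ) (m : ℕ) : ℝ := (hermiteP m).reverse.eval x

lemma gval_zero (x : ℝ) : gval x 0 = 1 := by simp only [gval, hermiteP]; rw [show (1 : Polynomial ℝ) = C 1 from (map_one C).symm, reverse_C]; simp

lemma gval_one (x : ℝ) (hx : x ≠ 0) : gval x 1 = 1 := by
  rw [gval, hermiteP_rev_eval 1 x hx]
  simp [hermiteP]
  field_simp

lemma gval_rec (x : ℝ) (hx : x ≠ 0) (m : ℕ) :
    gval x (m + 2) = gval x (m + 1) - ((m : ℝ) + 1) * x ^ 2 * gval x m := by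
  simp only [gval, hermiteP_rev_eval _ x hx]
  rw [hermiteP]
  simp only [eval_sub, eval_mul, eval_X, eval_C]
  field_simp
  ring

/-- For `n ≥ 1` and `0 < |x| ≤ 1/(3√n)` one has `Ĥ_{n-1}(x)/Ĥ_n(x) ≤ 1/(n x²)`. -/
theorem hermite_reverse_ratio_bound (n : ℕ) (hn : 1 ≤ n) (x : ℝ)
    (hx0 : 0 < |x|) (hx : |x| ≤ 1 / (3 * Real.sqrt n)) :
    (hermiteP (n - 1)).reverse.eval x / (hermiteP n).reverse.eval x ≤
      1 / ((n : ℝ) * x ^ 2) := by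
  have hxne : x ≠ 0 := by
    intro h; rw [h] at hx0; simp at hx0
  have hx2 : (0:ℝ) < x ^ 2 := by positivity
  have hnpos : (0:ℝ) < n := by exact_mod_cast hn
  -- key bound : n * x^2 ≤ 1/9
  have hkey : (n : ℝ) * x ^ 2 ≤ 1 / 9 := by
    have hs : (0:ℝ) < Real.sqrt n := Real.sqrt_pos.mpr hnpos
    have h1 : |x| * (3 * Real.sqrt n) ≤ 1 := by
      rw [← le_div_iff₀ (by positivity)]; exact hx
    have h2 : (|x| * (3 * Real.sqrt n)) ^ 2 ≤ 1 :=
      pow_le_one₀ (by positivity) h1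
    have h3 : Real.sqrt n ^ 2 = n := Real.sq_sqrt hnpos.le
    have h4 : |x| ^ 2 = x ^ 2 := sq_abs x
    nlinarith
  -- main induction
  have main : ∀ m, m ≤ n → 0 < gval x m ∧ gval x m ≤ 2 * gval x (m + 1) := by
    intro m
    induction m with
    | zero =>
      intro _
      rw [gval_zero, gval_one x hxne]
      norm_num
    | succ k ih =>
      intro hk
      obtain ⟨hpos, hle⟩ := ih (by omega)
      have hk1pos : 0 < gval x (k + 1) := by linarith
      refine ⟨hk1pos, ?_⟩
      rw [gval_rec x hxne k]
      have hkn : ((k : ℝ) + 1) ≤ n := by exact_mod_cast hk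
      have hb : ((k : ℝ) + 1) * x ^ 2 * gval x k ≤ (1 / 9) * (2 * gval x (k + 1)) := by
        have h1 : ((k : ℝ) + 1) * x ^ 2 ≤ 1 / 9 := by nlinarith
        have h2 : ((k : ℝ) + 1) * x ^ 2 * gval x k ≤ (1/9) * gval x k := by nlinarith
        nlinarith
      linarith
  obtain ⟨hpos, hle⟩ := main (n - 1) (by omega)
  have hnn : n - 1 + 1 = n := by omega
  rw [hnn] at hle
  have hgn : 0 < gval x n := by linarith
  -- g (n+1) ≥ 0
  have hrec : gval x (n + 1) = gval x n - (n : ℝ) * x ^ 2 * gval x (n - 1) := by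
    have := gval_rec x hxne (n - 1)
    have h1 : n - 1 + 2 = n + 1 := by omega
    have h2 : ((n - 1 : ℕ) : ℝ) + 1 = n := by
      have : ((n - 1 : ℕ) : ℝ) = (n : ℝ) - 1 := by
        push_cast [Nat.cast_sub hn]; ring
      rw [this]; ring
    rw [h1, hnn, h2] at this
    exact this
  have hg1 : 0 ≤ gval x (n + 1) := by
    rw [hrec]
    nlinarith
  -- conclude
  show gval x (n - 1) / gval x n ≤ 1 / ((n : ℝ) * x ^ 2)
  rw [div_le_div_iff₀ hgn (by positivity)]
  nlinarith [hg1, hrec]
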